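/- Unbiasedness of the shifted doubly robust regret estimator: under the stated setup, E[R̃(h,h')] = E[1[X∈D]·(1[h(X)≠Y] − 1[h'(X)≠Y])] + E[1[X∉D]·(1[h(X)≠h₀(X)] − 1[h'(X)≠h₀(X)])], i.e. the estimator is an unbiased estimate of the disagreement-region regret of h relative to h' (with the reference classifier h₀ used outside the disagreement region). -/

import Mathlib

open MeasureTheory

open Classical in
/-- Real-valued indicator of a proposition. -/
noncomputable def ind (p : Prop) : ℝ := if p then 1 else 0

/-- The instantaneous shifted doubly robust regret estimator. -/
noncomputable def Rtilde {Ω 𝒳 : Type*} (X : Ω → 𝒳) (Y Y' : Ω → Bool) (D : Set 𝒳)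
    (P : 𝒳 → ℝ) (Q : Ω → ℝ) (h h' h₀ : 𝒳 → Bool) (ω : Ω) : ℝ :=
  ind (X ω ∈ D) *
      (((ind (h (X ω) ≠ Y ω) - ind (h (X ω) ≠ Y' ω)) * Q ω / P (X ω)
          + ind (h (X ω) ≠ Y' ω))
        - ((ind (h' (X ω) ≠ Y ω) - ind (h' (X ω) ≠ Y' ω)) * Q ω / P (X ω)
          + ind (h' (X ω) ≠ Y' ω)))
    + ind (X ω ∉ D) * (ind (h (X ω) ≠ h₀ (X ω)) - ind (h' (X ω) ≠ h₀ (X ω)))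

lemma ind_nonneg (p : Prop) : 0 ≤ ind p := by unfold ind; split <;> norm_num
lemma ind_le_one (p : Prop) : ind p ≤ 1 := by unfold ind; split <;> norm_num
lemma abs_ind_le (p : Prop) : |ind p| ≤ 1 := by
  rw [abs_le]; exact ⟨by linarith [ind_nonneg p], ind_le_one p⟩

lemma measurable_ind {α : Type*} [MeasurableSpace α] {p : α → Prop}
    (hp : MeasurableSet {x | p x}) : Measurable fun x => ind (p x) := by
  unfold ind; exact Measurable.ite hp measurable_const measurable_const

lemma integrable_of_bdd {Ω : Type*} [MeasurableSpace Ω] {μ : Measure Ω} [IsFiniteMeasure μ]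
    {f : Ω → ℝ} (hf : Measurable f) (C : ℝ) (hC : ∀ ω, |f ω| ≤ C) : Integrable f μ :=
  (integrable_const C).mono' hf.aestronglyMeasurable (ae_of_all _ hC)

/-- Unbiasedness of the shifted doubly robust regret estimator. -/
theorem shifted_dr_regret_unbiased
    {Ω 𝒳 : Type*} [MeasurableSpace Ω] [MeasurableSpace 𝒳]
    (μ : Measure Ω) [IsProbabilityMeasure μ]
    (X : Ω → 𝒳) (hX : Measurable X)
    (Y Y' : Ω → Bool) (hY : Measurable Y) (hY' : Measurable Y')
    (D : Set 𝒳) (hD : MeasurableSet D)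
    (P : 𝒳 → ℝ) (hP : Measurable P)
    (pmin : ℝ) (hpmin : 0 < pmin)
    (hPbound : ∀ x, pmin ≤ P x ∧ P x ≤ 1)
    (Q : Ω → ℝ) (hQ : Measurable Q) (hQ01 : ∀ ω, Q ω = 0 ∨ Q ω = 1)
    (hQcond : ∀ g : 𝒳 × Bool × Bool → ℝ, Measurable g → (∃ C, ∀ z, |g z| ≤ C) →
      ∫ ω, g (X ω, Y ω, Y' ω) * Q ω ∂μ = ∫ ω, g (X ω, Y ω, Y' ω) * P (X ω) ∂μ)
    (h h' h₀ : 𝒳 → Bool) (hh : Measurable h) (hh' : Measurable h')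
    (hh₀ : Measurable h₀) :
    ∫ ω, Rtilde X Y Y' D P Q h h' h₀ ω ∂μ
      = (∫ ω, ind (X ω ∈ D) * (ind (h (X ω) ≠ Y ω) - ind (h' (X ω) ≠ Y ω)) ∂μ)
        + ∫ ω, ind (X ω ∉ D) *
            (ind (h (X ω) ≠ h₀ (X ω)) - ind (h' (X ω) ≠ h₀ (X ω))) ∂μ := by
  -- positivity facts about P
  have hPpos : ∀ x, 0 < P x := fun x => lt_of_lt_of_le hpmin (hPbound x).1
  have hPne : ∀ x, P x ≠ 0 := fun x => ne_of_gt (hPpos x)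
  -- the auxiliary function g
  set g : 𝒳 × Bool × Bool → ℝ := fun z =>
    ind (z.1 ∈ D) *
      ((ind (h z.1 ≠ z.2.1) - ind (h z.1 ≠ z.2.2))
        - (ind (h' z.1 ≠ z.2.1) - ind (h' z.1 ≠ z.2.2))) / P z.1 with hg_def
  -- measurability of g
  have hmeas_ne : ∀ (k : 𝒳 → Bool) (c : 𝒳 × Bool × Bool → Bool), Measurable k → Measurable c →
      Measurable fun z : 𝒳 × Bool × Bool => ind (k z.1 ≠ c z) := by
    intro k c hk hc
    exact measurable_ind ((measurableSet_eq_fun (hk.comp measurable_fst) hc).compl)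
  have hgm : Measurable g := by
    apply Measurable.div
    · apply Measurable.mul
      · exact measurable_ind (hD.preimage measurable_fst)
      · apply Measurable.sub <;> apply Measurable.sub <;>
          first
          | exact hmeas_ne h (fun z => z.2.1) hh (measurable_fst.comp measurable_snd)
          | exact hmeas_ne h (fun z => z.2.2) hh (measurable_snd.comp measurable_snd)
          | exact hmeas_ne h' (fun z => z.2.1) hh' (measurable_fst.comp measurable_snd)
          | exact hmeas_ne h' (fun z => z.2.2) hh' (measurable_snd.comp measurable_snd)
    · exact hP.comp measurable_fst
  -- bound on g
  have hgb : ∀ z, |g z| ≤ 2 / pmin := by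
    intro z
    have hnum : |ind (z.1 ∈ D) *
        ((ind (h z.1 ≠ z.2.1) - ind (h z.1 ≠ z.2.2))
          - (ind (h' z.1 ≠ z.2.1) - ind (h' z.1 ≠ z.2.2)))| ≤ 2 := by
      rw [abs_mul]
      have h1 := abs_ind_le (z.1 ∈ D)
      have h2 : |(ind (h z.1 ≠ z.2.1) - ind (h z.1 ≠ z.2.2))
          - (ind (h' z.1 ≠ z.2.1) - ind (h' z.1 ≠ z.2.2))| ≤ 2 := by
        have := ind_nonneg (h z.1 ≠ z.2.1); have := ind_le_one (h z.1 ≠ z.2.1)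
        have := ind_nonneg (h z.1 ≠ z.2.2); have := ind_le_one (h z.1 ≠ z.2.2)
        have := ind_nonneg (h' z.1 ≠ z.2.1); have := ind_le_one (h' z.1 ≠ z.2.1)
        have := ind_nonneg (h' z.1 ≠ z.2.2); have := ind_le_one (h' z.1 ≠ z.2.2)
        rw [abs_le]; constructor <;> linarith
      calc |ind (z.1 ∈ D)| * |(ind (h z.1 ≠ z.2.1) - ind (h z.1 ≠ z.2.2))
          - (ind (h' z.1 ≠ z.2.1) - ind (h' z.1 ≠ z.2.2))| ≤ 1 * 2 := by
            apply mul_le_mul h1 h2 (abs_nonneg _) (by norm_num)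
        _ = 2 := by norm_num
    rw [hg_def]
    simp only [abs_div]
    rw [abs_of_pos (hPpos z.1)]
    rw [div_le_div_iff₀ (hPpos z.1) hpmin]
    calc |ind (z.1 ∈ D) * _| * pmin ≤ 2 * pmin := by
          apply mul_le_mul_of_nonneg_right hnum (le_of_lt hpmin)
      _ ≤ 2 * P z.1 := by
          apply mul_le_mul_of_nonneg_left (hPbound z.1).1 (by norm_num)
    -- done with bound
  -- the four integrands
  set fQ : Ω → ℝ := fun ω => g (X ω, Y ω, Y' ω) * Q ω with hfQ_def
  set fP : Ω → ℝ := fun ω => g (X ω, Y ω, Y' ω) * P (X ω) with hfP_def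
  set t1 : Ω → ℝ := fun ω =>
    ind (X ω ∈ D) * (ind (h (X ω) ≠ Y ω) - ind (h' (X ω) ≠ Y ω)) with ht1_def
  set t2 : Ω → ℝ := fun ω =>
    ind (X ω ∉ D) * (ind (h (X ω) ≠ h₀ (X ω)) - ind (h' (X ω) ≠ h₀ (X ω))) with ht2_def
  have hXYY : Measurable fun ω => (X ω, Y ω, Y' ω) := hX.prodMk (hY.prodMk hY')
  have hQb : ∀ ω, |Q ω| ≤ 1 := by
    intro ω; rcases hQ01 ω with hq | hq <;> rw [hq] <;> norm_num
  have hfQint : Integrable fQ μ := by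
    apply integrable_of_bdd ((hgm.comp hXYY).mul hQ) (2 / pmin)
    intro ω
    simp only [Pi.mul_apply, Function.comp_apply, abs_mul]
    calc |g (X ω, Y ω, Y' ω)| * |Q ω| ≤ (2 / pmin) * 1 := by
          apply mul_le_mul (hgb _) (hQb ω) (abs_nonneg _)
          positivity
      _ = 2 / pmin := by ring
  have hfPint : Integrable fP μ := by
    apply integrable_of_bdd ((hgm.comp hXYY).mul (hP.comp hX)) (2 / pmin)
    intro ω
    simp only [Pi.mul_apply, Function.comp_apply, abs_mul]
    have hp1 : |P (X ω)| ≤ 1 := by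
      rw [abs_of_pos (hPpos (X ω))]; exact (hPbound (X ω)).2
    calc |g (X ω, Y ω, Y' ω)| * |P (X ω)| ≤ (2 / pmin) * 1 := by
          apply mul_le_mul (hgb _) hp1 (abs_nonneg _)
          positivity
      _ = 2 / pmin := by ring
  have hmeas_ne' : ∀ (k : 𝒳 → Bool) (c : Ω → Bool), Measurable k → Measurable c →
      Measurable fun ω : Ω => ind (k (X ω) ≠ c ω) := by
    intro k c hk hc
    exact measurable_ind ((measurableSet_eq_fun (hk.comp hX) hc).compl)
  have ht1m : Measurable t1 := by
    apply Measurable.mul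
    · exact measurable_ind (hD.preimage hX)
    · exact (hmeas_ne' h Y hh hY).sub (hmeas_ne' h' Y hh' hY)
  have ht2m : Measurable t2 := by
    apply Measurable.mul
    · exact measurable_ind (hD.compl.preimage hX)
    · exact (hmeas_ne' h (fun ω => h₀ (X ω)) hh (hh₀.comp hX)).sub
        (hmeas_ne' h' (fun ω => h₀ (X ω)) hh' (hh₀.comp hX))
  have hbd2 : ∀ (p q r : Prop), |ind p * (ind q - ind r)| ≤ 1 := by
    intro p q r
    rw [abs_mul]
    have h2 : |ind q - ind r| ≤ 1 := by
      have := ind_nonneg q; have := ind_le_one q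
      have := ind_nonneg r; have := ind_le_one r
      rw [abs_le]; constructor <;> linarith
    calc |ind p| * |ind q - ind r| ≤ 1 * 1 :=
          mul_le_mul (abs_ind_le p) h2 (abs_nonneg _) (by norm_num)
      _ = 1 := by norm_num
  have ht1int : Integrable t1 μ := integrable_of_bdd ht1m 1 (fun ω => hbd2 _ _ _)
  have ht2int : Integrable t2 μ := integrable_of_bdd ht2m 1 (fun ω => hbd2 _ _ _)
  -- pointwise decomposition
  have hpt : ∀ ω, Rtilde X Y Y' D P Q h h' h₀ ω = (fQ ω - fP ω) + (t1 ω + t2 ω) := by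
    intro ω
    rw [hfQ_def, hfP_def, ht1_def, ht2_def, hg_def]
    simp only [Rtilde]
    have hp : P (X ω) ≠ 0 := hPne (X ω)
    field_simp
    ring
  calc ∫ ω, Rtilde X Y Y' D P Q h h' h₀ ω ∂μ
      = ∫ ω, (fQ ω - fP ω) + (t1 ω + t2 ω) ∂μ := by
        exact integral_congr_ae (ae_of_all _ hpt)
    _ = (∫ ω, fQ ω ∂μ - ∫ ω, fP ω ∂μ) + (∫ ω, t1 ω ∂μ + ∫ ω, t2 ω ∂μ) := by
        have hsub : Integrable (fun ω => fQ ω - fP ω) μ := hfQint.sub hfPint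
        have hadd : Integrable (fun ω => t1 ω + t2 ω) μ := ht1int.add ht2int
        rw [integral_add hsub hadd, integral_sub hfQint hfPint,
          integral_add ht1int ht2int]
    _ = ∫ ω, t1 ω ∂μ + ∫ ω, t2 ω ∂μ := by
        rw [hQcond g hgm ⟨2 / pmin, hgb⟩]; ring
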